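/- arXiv:1803.07169 — 8 statements merged into one kernel-verified Lean document; each statement's English description precedes it below -/
import Mathlib

section
/- For every complex number s, every j ∈ {-1, 1}, and every natural number m, the absolute value of j^m times the generalized binomial coefficient C(-s, m) is at most (-1)^m · C(-|s|, m). -/
/-- Generalized binomial coefficient C(w,m) = w(w-1)⋯(w-m+1)/m!. -/
noncomputable def genBinom {K : Type*} [Field K] (w : K) (m : ℕ) : K :=
  (∏ i ∈ Finset.range m, (w - i)) / (m.factorial : K)

open Finset

theorem neg_one_pow_mul_genBinom_neg {K : Type*} [Field K] (x : K) (m : ℕ) :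
    (-1 : K) ^ m * genBinom (-x) m = (∏ i ∈ range m, (x + i)) / m.factorial := by
  rw [genBinom, mul_div_assoc', pow_eq_prod_const, ← prod_mul_distrib]
  congr 1
  exact prod_congr rfl fun i _ => by ring

theorem norm_genBinom_neg_le {𝕜 : Type*} [RCLike 𝕜] (z : 𝕜) (m : ℕ) :
    ‖genBinom (-z) m‖ ≤ (-1 : ℝ) ^ m * genBinom (-‖z‖) m := by
  rw [neg_one_pow_mul_genBinom_neg, genBinom, norm_div, RCLike.norm_natCast, norm_prod]
  gcongr with i
  calc ‖-z - i‖ ≤ ‖-z‖ + ‖(i : 𝕜)‖ := norm_sub_le _ _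
    _ = ‖z‖ + i := by rw [norm_neg, RCLike.norm_natCast]

theorem stmt_0 (s : ℂ) (j : ℂ) (hj : j = -1 ∨ j = 1) (m : ℕ) :
    ‖j ^ m * genBinom (-s) m‖ ≤ (-1 : ℝ) ^ m * genBinom (-‖s‖) m := by
  have hj_norm : ‖j‖ = 1 := by rcases hj with rfl | rfl <;> simp
  rw [norm_mul, norm_pow, hj_norm, one_pow, one_mul]
  exact norm_genBinom_neg_le s m
end

section
/- Let (a_n) be a bounded sequence of complex numbers, m₀ a nonnegative integer, q a positive integer, and j ∈ {-1, 1}. Then the double series ∑_{n=q+1}^∞ ∑_{m=m₀}^∞ (jq)^m · C(-s, m) · a_n / n^{s+m} converges absolutely for every complex s with Re(s) > 1 - m₀. -/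
/-!
Write `n = q + 1 + i` and `m = m₀ + k`. Since `n ≥ q + 1`, the `(i, k)` term is at most
`C (q + 1)^m₀ · n^-(Re s + m₀) · |C(-s, m)| (q / (q + 1))^m`, a product of a term of a
`p`-series with `p = Re s + m₀ > 1` and a term of a binomial series inside its disc of
convergence: for `N ≥ |s|` one has `|C(-s, m)| ≤ C(m + N, N)`, and `∑ C(m + N, N) rᵐ` converges
for `0 ≤ r < 1`.
-/

open Finset

section GenBinom

variable {𝕜 : Type*} [RCLike 𝕜]

theorem norm_genBinom_le_choose {w : 𝕜} {N : ℕ} (hw : ‖w‖ ≤ N) (m : ℕ) :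
    ‖genBinom w m‖ ≤ (m + N).choose N := by
  have hprod : ‖∏ i ∈ range m, (w - i)‖ ≤ ∏ i ∈ range m, ((N + 1 + i : ℕ) : ℝ) := by
    rw [norm_prod]
    refine prod_le_prod (fun _ _ => norm_nonneg _) fun i _ => ?_
    calc ‖w - i‖ ≤ ‖w‖ + i := by simpa using norm_sub_le w (i : 𝕜)
      _ ≤ N + 1 + i := by linarith
      _ = ((N + 1 + i : ℕ) : ℝ) := by push_cast; ring
  have hchoose : ∏ i ∈ range m, ((N + 1 + i : ℕ) : ℝ) = m.factorial * (m + N).choose N := by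
    rw [← Nat.cast_prod, ← Nat.ascFactorial_eq_prod_range,
      Nat.ascFactorial_eq_factorial_mul_choose, add_comm N m, Nat.choose_symm_add]
    push_cast; ring
  rw [genBinom, norm_div, RCLike.norm_natCast, div_le_iff₀ (by positivity)]
  linarith

theorem summable_norm_genBinom_mul_geometric (w : 𝕜) {r : ℝ} (hr₀ : 0 ≤ r) (hr₁ : r < 1) :
    Summable fun m => ‖genBinom w m‖ * r ^ m := by
  have hchoose := summable_choose_mul_geometric_of_norm_lt_one ⌈‖w‖⌉₊
    (by rwa [Real.norm_of_nonneg hr₀] : ‖r‖ < 1)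
  refine Summable.of_nonneg_of_le (fun _ => by positivity) (fun m => ?_) hchoose
  gcongr
  exact norm_genBinom_le_choose (Nat.le_ceil _) m

end GenBinom

theorem pow_div_rpow_le {q n σ : ℝ} (hq : 0 ≤ q) (hn : q + 1 ≤ n) (m₀ k : ℕ) :
    q ^ (m₀ + k) / n ^ (σ + (m₀ + k : ℕ)) ≤
      (q + 1) ^ m₀ * (q / (q + 1)) ^ (m₀ + k) / n ^ (σ + m₀) := by
  have hn₀ : 0 < n := by linarith
  have hsplit : n ^ (σ + (m₀ + k : ℕ)) = n ^ (σ + m₀) * n ^ k := by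
    rw [← Real.rpow_natCast n k, ← Real.rpow_add hn₀]; push_cast; ring_nf
  have hrhs : (q + 1) ^ m₀ * (q / (q + 1)) ^ (m₀ + k) = q ^ (m₀ + k) / (q + 1) ^ k := by
    rw [div_pow, pow_add (q + 1)]; field_simp
  rw [hsplit, hrhs, div_div, mul_comm ((q + 1) ^ k)]
  gcongr

theorem stmt_1_general (a : ℕ → ℂ) (C : ℝ) (hC : ∀ n, ‖a n‖ ≤ C)
    (m₀ : ℕ) (q : ℕ) (j : ℂ) (hj : j = -1 ∨ j = 1)
    (s : ℂ) (hs : 1 - (m₀ : ℝ) < s.re) :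
    Summable (fun p : ℕ × ℕ =>
      ‖(j * q) ^ (m₀ + p.2) * genBinom (-s) (m₀ + p.2) *
        a (q + 1 + p.1) / ((q + 1 + p.1 : ℕ) : ℂ) ^ (s + (m₀ + p.2 : ℕ))‖) := by
  set r : ℝ := q / (q + 1)
  have hr₁ : r < 1 := (div_lt_one (by positivity)).mpr (lt_add_one _)
  have hrow : Summable fun i : ℕ => (((q + 1 + i : ℕ) : ℝ) ^ (s.re + m₀))⁻¹ :=
    (Real.summable_nat_rpow_inv.mpr (by linarith)).comp_injective (add_right_injective _)
  have hcol : Summable fun k : ℕ => ‖genBinom (-s) (m₀ + k)‖ * r ^ (m₀ + k) := by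
    simpa only [add_comm _ m₀] using
      (summable_nat_add_iff m₀).mpr (summable_norm_genBinom_mul_geometric (-s) (by positivity) hr₁)
  refine Summable.of_nonneg_of_le (fun _ => norm_nonneg _) (fun ⟨i, k⟩ => ?_)
    ((hrow.mul_of_nonneg hcol (fun _ => by positivity) (fun _ => by positivity)).mul_left
      (C * (q + 1) ^ m₀))
  have hjq : ‖j * q‖ = q := by rcases hj with rfl | rfl <;> simp
  rw [norm_div, norm_mul, norm_mul, norm_pow, hjq,
    Complex.norm_natCast_cpow_of_pos (by omega)]
  dsimp only
  have hn : (q : ℝ) + 1 ≤ ((q + 1 + i : ℕ) : ℝ) := by push_cast; linarith [i.cast_nonneg (α := ℝ)]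
  rw [Complex.add_re, Complex.natCast_re]
  calc _ = ‖a (q + 1 + i)‖ * ‖genBinom (-s) (m₀ + k)‖ *
          (q ^ (m₀ + k) / ((q + 1 + i : ℕ) : ℝ) ^ (s.re + (m₀ + k : ℕ))) := by ring
    _ ≤ C * ‖genBinom (-s) (m₀ + k)‖ *
          ((q + 1) ^ m₀ * r ^ (m₀ + k) / ((q + 1 + i : ℕ) : ℝ) ^ (s.re + m₀)) := by
        have hC₀ : 0 ≤ C := (norm_nonneg _).trans (hC 0)
        gcongr ?_ * _ * ?_
        exacts [hC _, pow_div_rpow_le q.cast_nonneg hn m₀ k]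
    _ = _ := by ring

theorem stmt_1 (a : ℕ → ℂ) (C : ℝ) (hC : ∀ n, ‖a n‖ ≤ C)
    (m₀ : ℕ) (q : ℕ) (hq : 0 < q) (j : ℂ) (hj : j = -1 ∨ j = 1)
    (s : ℂ) (hs : 1 - (m₀ : ℝ) < s.re) :
    Summable (fun p : ℕ × ℕ =>
      ‖(j * q) ^ (m₀ + p.2) * genBinom (-s) (m₀ + p.2) *
        a (q + 1 + p.1) / ((q + 1 + p.1 : ℕ) : ℂ) ^ (s + (m₀ + p.2 : ℕ))‖) :=
  stmt_1_general a C hC m₀ q j hj s hs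
end

section
/- Let α > 1 be irrational, and let α' satisfy 1/α + 1/α' = 1. Then for every positive integer n, the fractional part of (⌊α'n⌋ + 1)/α lies in the open interval (1/α, 1). -/
/-!
Write `m = ⌊α' n⌋` and `f = {α' n}`, which lies in `(0, 1)` because `α'` is irrational.
Then `(m + 1)/α' = n + (1 - f)/α'` with `0 < (1 - f)/α' < 1`, and since `1/α = 1 - 1/α'`,
`(m + 1)/α ≡ -(m + 1)/α' (mod 1)`, whose fractional part is `1 - (1 - f)/α'`;
this lies strictly between `1 - 1/α' = 1/α` and `1`.
-/

theorem Real.HolderConjugate.irrational {p q : ℝ} (h : p.HolderConjugate q) (hp : Irrational p) :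
    Irrational q := by
  have hq_inv : Irrational q⁻¹ := by
    rw [← h.one_sub_inv]
    simpa using hp.inv.intCast_sub 1
  exact hq_inv.of_inv

theorem Int.fract_floor_mul_add_one_div {β : ℝ} (hβ : 1 < β) (n : ℤ) :
    Int.fract ((⌊β * n⌋ + 1) / β) = (1 - Int.fract (β * n)) / β := by
  have hβ0 : 0 < β := zero_lt_one.trans hβ
  have hsplit : ((⌊β * n⌋ : ℝ) + 1) / β = n + (1 - Int.fract (β * n)) / β := by
    rw [Int.fract]
    field_simp
    ring
  rw [hsplit, Int.fract_intCast_add, Int.fract_eq_self]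
  constructor
  · exact div_nonneg (by linarith [Int.fract_lt_one (β * n)]) hβ0.le
  · rw [div_lt_one hβ0]
    linarith [Int.fract_nonneg (β * n)]

theorem Real.HolderConjugate.fract_floor_mul_add_one_div {α β : ℝ} (h : α.HolderConjugate β)
    (n : ℤ) : Int.fract ((⌊β * n⌋ + 1) / α) = 1 - (1 - Int.fract (β * n)) / β := by
  have hsplit : ((⌊β * n⌋ : ℝ) + 1) / α = ((⌊β * n⌋ + 1 : ℤ) : ℝ) + -((⌊β * n⌋ + 1) / β) := by
    rw [div_eq_mul_inv, ← h.symm.one_sub_inv]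
    push_cast
    ring
  have hfract_ne : Int.fract ((⌊β * n⌋ + 1) / β) ≠ 0 := by
    rw [Int.fract_floor_mul_add_one_div h.symm.lt]
    exact (div_pos (sub_pos.mpr (Int.fract_lt_one _)) h.symm.pos).ne'
  rw [hsplit, Int.fract_intCast_add, Int.fract_neg hfract_ne,
    Int.fract_floor_mul_add_one_div h.symm.lt]

theorem stmt_5 (α α' : ℝ) (hα : 1 < α) (hirr : Irrational α)
    (hconj : 1 / α + 1 / α' = 1) (n : ℕ) (hn : 0 < n) :
    Int.fract (((⌊α' * n⌋ : ℝ) + 1) / α) ∈ Set.Ioo (1 / α) 1 := by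
  have h : α.HolderConjugate α' := Real.holderConjugate_iff.mpr ⟨hα, by simpa using hconj⟩
  have hfract_pos : 0 < Int.fract (α' * n) := by
    rw [Int.fract_pos]
    exact ((h.irrational hirr).mul_natCast hn.ne').ne_int _
  have hα'_pos : 0 < α' := h.symm.pos
  have key := h.fract_floor_mul_add_one_div n
  rw [Int.cast_natCast] at key
  rw [key, one_div, ← h.symm.one_sub_inv]
  constructor
  · rw [sub_lt_sub_iff_left, inv_eq_one_div, div_lt_div_iff_of_pos_right hα'_pos]
    linarith
  · exact sub_lt_self _ (div_pos (sub_pos.mpr (Int.fract_lt_one _)) hα'_pos)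
end

section
/- Let α > 1 be irrational and β = 1/α. Then for all s with Re(s) > 1, the Dirichlet series ∑_{n≥1} (⌈β(n+1)⌉ - ⌈βn⌉)/n^s equals the Beatty zeta function ζ_α(s) = ∑_{n≥1} ⌊αn⌋^{-s}. -/
/-!
`⌊α m⌋ = n` exactly when the integer `m` lies in `[n/α, (n+1)/α)`. For `α ≥ 1` this interval has
length at most one, so it contains `⌈(n+1)/α⌉ - ⌈n/α⌉ ∈ {0, 1}` integers. Hence the coefficients
of the left-hand series are the indicator of the Beatty sequence `(⌊α m⌋)_{m ≥ 1}`, which is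
strictly increasing, and the identity is a reindexing of the sum along `m ↦ ⌊α m⌋`.
-/

section FloorRing

variable {K : Type*} [Field K] [LinearOrder K] [IsStrictOrderedRing K] [FloorRing K]

theorem Int.ceil_sub_ceil_eq_zero_or_one {x y : K} (hxy : x ≤ y) (hyx : y ≤ x + 1) :
    ⌈y⌉ - ⌈x⌉ = 0 ∨ ⌈y⌉ - ⌈x⌉ = 1 := by
  have hlow : ⌈x⌉ ≤ ⌈y⌉ := Int.ceil_mono hxy
  have hupp : ⌈y⌉ ≤ ⌈x⌉ + 1 := (Int.ceil_mono hyx).trans_eq (Int.ceil_add_one x)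
  omega

theorem Int.ceil_sub_ceil_eq_one_iff {x y : K} (hyx : y ≤ x + 1) :
    ⌈y⌉ - ⌈x⌉ = 1 ↔ ∃ m : ℤ, x ≤ m ∧ (m : K) < y := by
  constructor
  · intro h
    refine ⟨⌈x⌉, Int.le_ceil x, ?_⟩
    have := Int.ceil_lt_add_one y
    rw [show ⌈y⌉ = ⌈x⌉ + 1 by omega, Int.cast_add, Int.cast_one] at this
    linarith
  · rintro ⟨m, hxm, hmy⟩
    have hlow : ⌈x⌉ < ⌈y⌉ := (Int.ceil_le.2 hxm).trans_lt (Int.lt_ceil.2 hmy)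
    have hupp : ⌈y⌉ ≤ ⌈x⌉ + 1 := (Int.ceil_mono hyx).trans_eq (Int.ceil_add_one x)
    omega

theorem Int.floor_mul_eq_iff {α : K} (hα : 0 < α) (x : K) (n : ℤ) :
    ⌊α * x⌋ = n ↔ α⁻¹ * n ≤ x ∧ x < α⁻¹ * (n + 1) := by
  rw [Int.floor_eq_iff, inv_mul_le_iff₀ hα, lt_inv_mul_iff₀ hα]

theorem strictMono_floor_mul {α : K} (hα : 1 ≤ α) : StrictMono fun m : ℤ ↦ ⌊α * m⌋ := by
  intro a b hab
  have hab' : (a : K) + 1 ≤ b := by exact_mod_cast hab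
  calc ⌊α * a⌋ < ⌊α * a + 1⌋ := by rw [Int.floor_add_one]; omega
    _ ≤ ⌊α * b⌋ := Int.floor_mono (by nlinarith)

theorem ceil_inv_mul_sub_ceil_inv_mul_eq_zero_or_one {α : K} (hα : 1 ≤ α) (n : ℤ) :
    ⌈α⁻¹ * (n + 1)⌉ - ⌈α⁻¹ * n⌉ = 0 ∨ ⌈α⁻¹ * (n + 1)⌉ - ⌈α⁻¹ * n⌉ = 1 := by
  have hinv : 0 ≤ α⁻¹ := inv_nonneg.2 (zero_le_one.trans hα)
  exact Int.ceil_sub_ceil_eq_zero_or_one (by nlinarith) (by nlinarith [inv_le_one_of_one_le₀ hα])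

theorem ceil_inv_mul_sub_ceil_inv_mul_eq_one_iff {α : K} (hα : 1 ≤ α) (n : ℤ) :
    ⌈α⁻¹ * (n + 1)⌉ - ⌈α⁻¹ * n⌉ = 1 ↔ ∃ m : ℤ, ⌊α * m⌋ = n := by
  rw [Int.ceil_sub_ceil_eq_one_iff (by nlinarith [inv_le_one_of_one_le₀ hα])]
  simp only [Int.floor_mul_eq_iff (zero_lt_one.trans_le hα)]

end FloorRing

section BeattyPNat

variable {α : ℝ} (hα : 1 ≤ α)

noncomputable def beattyPNat (m : ℕ+) : ℕ+ :=
  ⟨⌊α * m⌋₊, Nat.floor_pos.2 (one_le_mul_of_one_le_of_one_le hα (Nat.one_le_cast.2 m.pos))⟩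

theorem beattyPNat_coe (m : ℕ+) : ((beattyPNat hα m : ℕ) : ℤ) = ⌊α * m⌋ :=
  Int.natCast_floor_eq_floor (by positivity)

theorem beattyPNat_injective : Function.Injective (beattyPNat hα) := by
  intro a b hab
  have h : ⌊α * ((a : ℤ) : ℝ)⌋ = ⌊α * ((b : ℤ) : ℝ)⌋ := by
    simpa [beattyPNat_coe] using congrArg (fun n : ℕ+ ↦ ((n : ℕ) : ℤ)) hab
  exact PNat.coe_injective (by exact_mod_cast (strictMono_floor_mul hα).injective h)

theorem mem_range_beattyPNat {n : ℕ+} {m : ℤ} (h : ⌊α * m⌋ = n) :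
    n ∈ Set.range (beattyPNat hα) := by
  have hm : 0 < m := by
    have : (1 : ℝ) ≤ α * m := by
      rw [← Int.cast_one, ← Int.le_floor, h]; exact_mod_cast n.pos
    exact_mod_cast pos_of_mul_pos_right (zero_lt_one.trans_le this) (zero_le_one.trans hα)
  lift m to ℕ using hm.le
  exact ⟨⟨m, by omega⟩, PNat.coe_injective (Nat.cast_injective ((beattyPNat_coe hα _).trans h))⟩

end BeattyPNat

theorem stmt_7_general (α : ℝ) (hα : 1 < α) (β : ℝ) (hβ : β = 1 / α)
    (s : ℂ) :
    ∑' n : ℕ+, ((⌈β * ((n : ℝ) + 1)⌉ - ⌈β * n⌉ : ℤ) : ℂ) / (n : ℂ) ^ s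
      = ∑' n : ℕ+, ((⌊α * n⌋ : ℂ)) ^ (-s) := by
  subst hβ
  simp only [one_div]
  have hcoeff (n : ℕ+) := ceil_inv_mul_sub_ceil_inv_mul_eq_one_iff hα.le (n : ℤ)
  have hcoeff01 (n : ℕ+) := ceil_inv_mul_sub_ceil_inv_mul_eq_zero_or_one hα.le (n : ℤ)
  push_cast at hcoeff hcoeff01
  rw [← (beattyPNat_injective hα.le).tsum_eq]
  · refine tsum_congr fun m ↦ ?_
    rw [(hcoeff _).2 ⟨m, by simp [beattyPNat_coe]⟩]
    have hcast : ((beattyPNat hα.le m : ℕ) : ℂ) = (⌊α * m⌋ : ℂ) := by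
      exact_mod_cast congrArg (Int.cast (R := ℂ)) (beattyPNat_coe hα.le m)
    rw [hcast, Int.cast_one, one_div, Complex.cpow_neg]
  · intro n hn
    have hne : ⌈α⁻¹ * ((n : ℝ) + 1)⌉ - ⌈α⁻¹ * n⌉ ≠ 0 := fun h ↦ hn (by simp [h])
    obtain ⟨m, hm⟩ := (hcoeff n).1 ((hcoeff01 n).resolve_left hne)
    exact mem_range_beattyPNat hα.le hm

theorem stmt_7 (α : ℝ) (hα : 1 < α) (hirr : Irrational α) (β : ℝ) (hβ : β = 1 / α)
    (s : ℂ) (hs : 1 < s.re) :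
    ∑' n : ℕ+, ((⌈β * ((n : ℝ) + 1)⌉ - ⌈β * n⌉ : ℤ) : ℂ) / (n : ℂ) ^ s
      = ∑' n : ℕ+, ((⌊α * n⌋ : ℂ)) ^ (-s) :=
  stmt_7_general α hα β hβ s
end

section
/- Let α be a positive irrational and q a positive integer. For all s with Re(s) > 1, g_{αq}(s) = ∑_{n ∈ A_{αq}} n^{-s} satisfies g_{αq}(s) = ∑_{n>q} R(α(n-q)) n^{-s} + ∑_{n=1}^{q} R(α(n-q)) n^{-s} - J_α(s) + {αq}·ζ(s) - (1/2)q^{-s}, where J_α(s) = ∑_{n≥1} R(αn) n^{-s}. -/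
/-! For irrational `α`, the points `α n` (`n ≥ 1`) and `α (n - q)` (`n ≠ q`) are never
integers, so there `R x = {x} - 1/2`, and `{x - y} = {x} - {y} + [{x} < {y}]` gives the pointwise
identity `[{α n} < {α q}] = R (α (n - q)) - R (α n) + {α q} - [n = q] / 2`.
Multiplied by `n ^ (-s)` it becomes an identity of absolutely convergent Dirichlet series (the
coefficients are bounded), which are summed termwise; the constant `{α q}` yields `{α q} ζ(s)`. -/

/-- The odd 1-periodic sawtooth function: R(x) = {x} - 1/2 if x ∉ ℤ, R(x) = 0 if x ∈ ℤ. -/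
noncomputable def sawR (x : ℝ) : ℝ := if Int.fract x = 0 then 0 else Int.fract x - 1 / 2

lemma Irrational.fract_ne_zero {x : ℝ} (hx : Irrational x) : Int.fract x ≠ 0 :=
  Int.fract_ne_zero_iff.2 fun ⟨m, hm⟩ => hx.ne_int m hm.symm

@[simp]
lemma sawR_zero : sawR 0 = 0 := by simp [sawR]

lemma sawR_of_fract_ne_zero {x : ℝ} (hx : Int.fract x ≠ 0) : sawR x = Int.fract x - 1 / 2 :=
  if_neg hx

lemma abs_sawR_le_half (x : ℝ) : |sawR x| ≤ 1 / 2 := by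
  unfold sawR
  split_ifs
  · norm_num
  · rw [abs_le]
    constructor <;> linarith [Int.fract_nonneg x, Int.fract_lt_one x]

lemma Int.fract_sub_eq {R : Type*} [CommRing R] [LinearOrder R] [IsStrictOrderedRing R] [FloorRing R]
    (x y : R) :
    Int.fract (x - y) = Int.fract x - Int.fract y + if Int.fract x < Int.fract y then 1 else 0 := by
  have hx := Int.fract_nonneg x
  have hx' := Int.fract_lt_one x
  have hy := Int.fract_nonneg y
  have hy' := Int.fract_lt_one y
  refine Int.fract_eq_iff.2
    ⟨?_, ?_, ⌊x⌋ - ⌊y⌋ - if Int.fract x < Int.fract y then 1 else 0, ?_⟩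
  · split_ifs <;> linarith
  · split_ifs <;> linarith
  · unfold Int.fract
    split_ifs <;> push_cast <;> abel

lemma ite_fract_lt_fract_eq_sawR {x y : ℝ} (hx : Int.fract x ≠ 0) (hxy : Int.fract (x - y) ≠ 0) :
    (if Int.fract x < Int.fract y then 1 else 0 : ℝ) = sawR (x - y) - sawR x + Int.fract y := by
  rw [sawR_of_fract_ne_zero hxy, sawR_of_fract_ne_zero hx, Int.fract_sub_eq]
  ring

lemma ite_fract_mul_lt_fract_mul_eq_sawR {α : ℝ} (hα : Irrational α) {n q : ℕ} (hn : n ≠ 0)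
    (hq : q ≠ 0) :
    (if Int.fract (α * n) < Int.fract (α * q) then 1 else 0 : ℝ)
      = sawR (α * (n - q)) - sawR (α * n) + Int.fract (α * q) - if n = q then 1 / 2 else 0 := by
  have hαn : Int.fract (α * n) ≠ 0 := (hα.mul_natCast hn).fract_ne_zero
  rcases eq_or_ne n q with rfl | hnq
  · simp [sawR_of_fract_ne_zero hαn]
  · have hαnq : Int.fract (α * n - α * q) ≠ 0 := by
      have := (hα.mul_intCast (sub_ne_zero.2 (Int.natCast_inj.not.2 hnq))).fract_ne_zero
      push_cast at this
      rwa [mul_sub] at this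
    rw [mul_sub, ite_fract_lt_fract_eq_sawR hαn hαnq, if_neg hnq, sub_zero]

lemma ite_fract_mul_lt_fract_mul_cpow_neg_eq {α : ℝ} (hα : Irrational α) {q : ℕ} (hq : q ≠ 0)
    {s : ℂ} (h0 : (0 : ℂ) ^ (-s) = 0) (n : ℕ) :
    (if Int.fract (α * n) < Int.fract (α * q) then (n : ℂ) ^ (-s) else 0)
      = (sawR (α * ((n : ℝ) - q)) : ℂ) * (n : ℂ) ^ (-s) - (sawR (α * n) : ℂ) * (n : ℂ) ^ (-s)
        + ((Int.fract (α * q) : ℝ) : ℂ) * (n : ℂ) ^ (-s)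
        - if n = q then 1 / 2 * (q : ℂ) ^ (-s) else 0 := by
  rcases eq_or_ne n 0 with rfl | hn
  · simp [h0, hq.symm]
  · have key := congrArg ((↑) : ℝ → ℂ) (ite_fract_mul_lt_fract_mul_eq_sawR hα hn hq)
    split_ifs at key ⊢ <;> subst_vars <;> push_cast at key <;>
      linear_combination key * (n : ℂ) ^ (-s)

lemma summable_ofReal_mul_natCast_cpow_neg {c : ℕ → ℝ} {C : ℝ} (hc : ∀ n, |c n| ≤ C) {s : ℂ}
    (hs : 1 < s.re) : Summable fun n : ℕ => (c n : ℂ) * (n : ℂ) ^ (-s) := by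
  refine ((Complex.summable_one_div_nat_cpow.2 hs).norm.mul_left C).of_norm_bounded fun n => ?_
  rw [norm_mul, Complex.norm_real, Real.norm_eq_abs, Complex.cpow_neg, ← one_div]
  exact mul_le_mul_of_nonneg_right (hc n) (norm_nonneg _)

lemma tsum_eq_sum_Icc_add_tsum {G : Type*} [AddCommGroup G] [TopologicalSpace G]
    [IsTopologicalAddGroup G] [T2Space G] {f : ℕ → G} (hf : Summable f) (h0 : f 0 = 0) (q : ℕ) :
    ∑' n, f n = ∑ n ∈ Finset.Icc 1 q, f n + ∑' m, f (q + 1 + m) := by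
  rw [← hf.sum_add_tsum_nat_add (q + 1), Finset.sum_range_succ', h0, add_zero,
    ← Finset.Ico_add_one_right_eq_Icc, Finset.sum_Ico_eq_sum_range, Nat.add_sub_cancel]
  simp only [add_comm]

open Classical in
theorem stmt_9_general (α : ℝ) (hirr : Irrational α) (q : ℕ) (hq : 0 < q)
    (s : ℂ) (hs : 1 < s.re) :
    ∑' n : ℕ+, (if Int.fract (α * n) < Int.fract (α * q) then (n : ℂ) ^ (-s) else 0)
      = (∑' m : ℕ, (sawR (α * (((q + 1 + m : ℕ) : ℝ) - q)) : ℂ) * ((q + 1 + m : ℕ) : ℂ) ^ (-s))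
        + (∑ n ∈ Finset.Icc 1 q, (sawR (α * ((n : ℝ) - q)) : ℂ) * (n : ℂ) ^ (-s))
        - (∑' n : ℕ+, (sawR (α * (n : ℝ)) : ℂ) * (n : ℂ) ^ (-s))
        + ((Int.fract (α * q) : ℝ) : ℂ) * riemannZeta s
        - (1 / 2) * (q : ℂ) ^ (-s) := by
  have h0 : (0 : ℂ) ^ (-s) = 0 := by
    rw [Complex.zero_cpow (neg_ne_zero.2 ?_)]
    rintro rfl
    norm_num at hs
  set A : ℕ → ℂ := fun n => (sawR (α * ((n : ℝ) - q)) : ℂ) * (n : ℂ) ^ (-s)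
  set B : ℕ → ℂ := fun n => (sawR (α * n) : ℂ) * (n : ℂ) ^ (-s)
  have hA : Summable A := summable_ofReal_mul_natCast_cpow_neg (fun _ => abs_sawR_le_half _) hs
  have hB : Summable B := summable_ofReal_mul_natCast_cpow_neg (fun _ => abs_sawR_le_half _) hs
  have hζ : Summable fun n : ℕ => (n : ℂ) ^ (-s) := by
    simpa [Complex.cpow_neg] using Complex.summable_one_div_nat_cpow.2 hs
  rw [tsum_pnat_eq_tsum_of_eq_zero (f := fun n : ℕ =>
      if Int.fract (α * n) < Int.fract (α * q) then (n : ℂ) ^ (-s) else 0) (by simp [h0]),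
    tsum_pnat_eq_tsum_of_eq_zero (f := B) (by simp [B, h0]),
    tsum_congr (ite_fract_mul_lt_fract_mul_cpow_neg_eq hirr hq.ne' h0),
    ((hA.sub hB).add (hζ.mul_left _)).tsum_sub (hasSum_ite_eq q _).summable,
    (hA.sub hB).tsum_add (hζ.mul_left _), hA.tsum_sub hB,
    tsum_eq_sum_Icc_add_tsum hA (by simp [A, h0]) q, tsum_mul_left, tsum_ite_eq,
    zeta_eq_tsum_one_div_nat_cpow hs]
  simp only [A, Complex.cpow_neg, one_div]
  ring

open Classical in
theorem stmt_9 (α : ℝ) (hα : 0 < α) (hirr : Irrational α) (q : ℕ) (hq : 0 < q)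
    (s : ℂ) (hs : 1 < s.re) :
    ∑' n : ℕ+, (if Int.fract (α * n) < Int.fract (α * q) then (n : ℂ) ^ (-s) else 0)
      = (∑' m : ℕ, (sawR (α * (((q + 1 + m : ℕ) : ℝ) - q)) : ℂ) * ((q + 1 + m : ℕ) : ℂ) ^ (-s))
        + (∑ n ∈ Finset.Icc 1 q, (sawR (α * ((n : ℝ) - q)) : ℂ) * (n : ℂ) ^ (-s))
        - (∑' n : ℕ+, (sawR (α * (n : ℝ)) : ℂ) * (n : ℂ) ^ (-s))
        + ((Int.fract (α * q) : ℝ) : ℂ) * riemannZeta s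
        - (1 / 2) * (q : ℂ) ^ (-s) :=
  stmt_9_general α hirr q hq s hs
end

section
/- Let α = p/q with p, q coprime positive integers and p ≥ q. Then for all s with Re(s) > 1, the Beatty zeta function satisfies ζ_α(s) = p^{-s} ∑_{ℓ=1}^{q} ζ(s; ⌊ℓp/q⌋/p), where ζ(s;γ) is the Hurwitz zeta function. -/
/-! Write `n = m q + ℓ` with `1 ≤ ℓ ≤ q`. Then `⌊n p / q⌋ = m p + ⌊ℓ p / q⌋ = p (m + γ_ℓ)` with
`γ_ℓ = ⌊ℓ p / q⌋ / p ∈ [0, 1]`, so the Beatty series splits into the `q` residue classes of `n`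
mod `q`, the class of `ℓ` contributing `p^{-s}` times the Hurwitz series at `γ_ℓ`. Since
`γ_ℓ ∈ [0, 1]`, that series is the convergent Dirichlet series of `hurwitzZeta γ_ℓ s`, and a
finite union of convergent fibres converges to the sum of their sums. -/

/-- The Hurwitz zeta series ∑_{n≥0} (n+γ)^{-s}, convergent for Re(s) > 1. -/
noncomputable def hurwitzSum (s : ℂ) (γ : ℝ) : ℂ := ∑' n : ℕ, ((n : ℂ) + γ) ^ (-s)

open Set

theorem hasSum_prod_of_fiberwise {ι β M : Type*} [Fintype ι] [AddCommMonoid M] [TopologicalSpace M]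
    [ContinuousAdd M] {f : ι → β → M} {a : ι → M} (h : ∀ i, HasSum (f i) (a i)) :
    HasSum (fun x : ι × β ↦ f x.1 x.2) (∑ i, a i) := by
  classical
  have hslice (i : ι) : HasSum (fun x : ι × β ↦ if x.1 = i then f x.1 x.2 else 0) (a i) := by
    rw [← (Prod.mk_right_injective i).hasSum_iff]
    · simpa [Function.comp_def] using h i
    · rintro ⟨j, b⟩ hjb
      rw [if_neg]
      rintro rfl
      exact hjb ⟨b, rfl⟩
  convert hasSum_sum fun i _ ↦ hslice i
  simp

lemma hasSum_hurwitzSum {a : ℝ} (ha : a ∈ Icc 0 1) {s : ℂ} (hs : 1 < s.re) :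
    HasSum (fun n : ℕ ↦ ((n : ℂ) + a) ^ (-s)) (hurwitzSum s a) := by
  have h := HurwitzZeta.hasSum_hurwitzZeta_of_one_lt_re ha hs
  simp only [one_div, ← Complex.cpow_neg] at h
  exact h.summable.hasSum

lemma floor_div_mul_mul_add {p q : ℕ} (hq : q ≠ 0) (m ℓ : ℕ) :
    ⌊(p / q : ℝ) * ((m * q + ℓ : ℕ) : ℝ)⌋ = ⌊(ℓ : ℝ) * p / q⌋ + m * p := by
  have : (p / q : ℝ) * ((m * q + ℓ : ℕ) : ℝ) = (ℓ : ℝ) * p / q + ((m * p : ℤ) : ℝ) := by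
    push_cast
    field_simp
    ring
  rw [this, Int.floor_add_intCast]

lemma floor_mul_div_div_mem_Icc {p q ℓ : ℕ} (hℓ : ℓ ≤ q) :
    (⌊(ℓ : ℝ) * p / q⌋ : ℝ) / p ∈ Icc 0 1 := by
  refine ⟨by positivity, div_le_one_of_le₀ ?_ p.cast_nonneg⟩
  calc (⌊(ℓ : ℝ) * p / q⌋ : ℝ) ≤ ℓ * p / q := Int.floor_le _
    _ ≤ p := div_le_of_le_mul₀ q.cast_nonneg p.cast_nonneg (by rw [mul_comm]; gcongr)

lemma Fin.sum_univ_add_one_eq_sum_Icc {M : Type*} [AddCommMonoid M] (q : ℕ) (g : ℕ → M) :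
    ∑ j : Fin q, g (j + 1) = ∑ ℓ ∈ Finset.Icc 1 q, g ℓ := by
  rw [Fin.sum_univ_eq_sum_range (fun j ↦ g (j + 1)), Finset.range_eq_Ico, Finset.sum_Ico_add' g,
    zero_add, Finset.Ico_add_one_right_eq_Icc]

lemma floor_div_mul_mul_add_cpow_neg {p q : ℕ} (hp : 0 < p) (hq : q ≠ 0) (m ℓ : ℕ) (s : ℂ) :
    (⌊(p / q : ℝ) * ((m * q + ℓ : ℕ) : ℝ)⌋ : ℂ) ^ (-s)
      = (p : ℂ) ^ (-s) * ((m : ℂ) + ((⌊(ℓ : ℝ) * p / q⌋ : ℝ) / p : ℝ)) ^ (-s) := by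
  have hp0 : (p : ℂ) ≠ 0 := by exact_mod_cast hp.ne'
  have hfloor : (⌊(p / q : ℝ) * ((m * q + ℓ : ℕ) : ℝ)⌋ : ℂ)
      = ((p * (m + (⌊(ℓ : ℝ) * p / q⌋ : ℝ) / p) : ℝ) : ℂ) := by
    rw [floor_div_mul_mul_add hq]
    push_cast
    field_simp
    ring
  rw [hfloor, Complex.ofReal_mul, Complex.mul_cpow_ofReal_nonneg p.cast_nonneg (by positivity)]
  push_cast
  rfl

theorem stmt_12_general (p q : ℕ) (hp : 0 < p) (hq : 0 < q)
    (α : ℝ) (hα : α = (p : ℝ) / q) (s : ℂ) (hs : 1 < s.re) :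
    ∑' n : ℕ+, ((⌊α * n⌋ : ℂ)) ^ (-s)
      = (p : ℂ) ^ (-s) *
          ∑ ℓ ∈ Finset.Icc 1 q, hurwitzSum s ((⌊((ℓ : ℝ) * p) / q⌋ : ℝ) / p) := by
  subst hα
  have := NeZero.of_pos hq
  let e : Fin q × ℕ ≃ ℕ+ :=
    (Equiv.prodComm _ _).trans ((Nat.divModEquiv q).symm.trans Equiv.pnatEquivNat.symm)
  have he (x : Fin q × ℕ) : ((e x : ℕ+) : ℕ) = x.2 * q + (x.1 + 1) := by
    simp [e, add_assoc]
  have hslice (j : Fin q) := (hasSum_hurwitzSum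
    (floor_mul_div_div_mem_Icc (p := p) (ℓ := j + 1) j.2) hs).mul_left ((p : ℂ) ^ (-s))
  rw [← e.tsum_eq, ← Fin.sum_univ_add_one_eq_sum_Icc, Finset.mul_sum]
  refine ((hasSum_prod_of_fiberwise hslice).congr_fun fun x ↦ ?_).tsum_eq
  simp only [he, floor_div_mul_mul_add_cpow_neg hp hq.ne']

theorem stmt_12 (p q : ℕ) (hp : 0 < p) (hq : 0 < q) (hcop : Nat.Coprime p q) (hpq : q ≤ p)
    (α : ℝ) (hα : α = (p : ℝ) / q) (s : ℂ) (hs : 1 < s.re) :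
    ∑' n : ℕ+, ((⌊α * n⌋ : ℂ)) ^ (-s)
      = (p : ℂ) ^ (-s) *
          ∑ ℓ ∈ Finset.Icc 1 q, hurwitzSum s ((⌊((ℓ : ℝ) * p) / q⌋ : ℝ) / p) :=
  stmt_12_general p q hp hq α hα s hs
end

section
/- Let 0 < α < 1 be irrational and β = 1/α. Then for all s with Re(s) > 1, the Sturmian Dirichlet series satisfies S_α(s) = ⌊β⌋·ζ(s) + S_{1/{β}}(s), where {β} denotes the fractional part of β. -/
/-!
Writing `β = ⌊β⌋ + {β}`, the integer part `⌊β⌋ n` passes through both ceilings, so the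
`n`-th coefficient of `S_α` is `⌊β⌋` plus the `n`-th coefficient of `S_{1/{β}}`. The
latter coefficients lie in `{0, 1}`, so both series converge absolutely for `Re s > 1`
and may be split termwise; the constant part sums to `⌊β⌋ ζ(s)`.
-/

noncomputable def sturmianCoeff (γ x : ℝ) : ℤ := ⌈γ * x⌉ - ⌈γ * (x - 1)⌉

lemma sturmianCoeff_eq_floor_add_fract (β : ℝ) (n : ℤ) :
    sturmianCoeff β n = ⌊β⌋ + sturmianCoeff (Int.fract β) n := by
  have hsplit (x : ℤ) : β * x = Int.fract β * x + ((⌊β⌋ * x : ℤ) : ℝ) := by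
    push_cast
    rw [Int.fract]
    ring
  have hn : ((n : ℝ) - 1) = ((n - 1 : ℤ) : ℝ) := by push_cast; ring
  simp only [sturmianCoeff, hn, hsplit, Int.ceil_add_intCast]
  ring

lemma sturmianCoeff_nonneg {γ : ℝ} (hγ : 0 ≤ γ) (x : ℝ) : 0 ≤ sturmianCoeff γ x :=
  sub_nonneg.mpr (Int.ceil_le_ceil (by nlinarith))

lemma sturmianCoeff_le_one {γ : ℝ} (hγ : γ ≤ 1) (x : ℝ) : sturmianCoeff γ x ≤ 1 := by
  have hceil : ⌈γ⌉ ≤ 1 := Int.ceil_le.mpr (by exact_mod_cast hγ)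
  calc sturmianCoeff γ x = ⌈γ * (x - 1) + γ⌉ - ⌈γ * (x - 1)⌉ := by
        rw [sturmianCoeff]; ring_nf
    _ ≤ ⌈γ⌉ := by linarith [Int.ceil_add_le (γ * (x - 1)) γ]
    _ ≤ 1 := hceil

lemma norm_sturmianCoeff_fract_le_one (β x : ℝ) :
    ‖(sturmianCoeff (Int.fract β) x : ℂ)‖ ≤ 1 := by
  rw [Complex.norm_intCast, abs_le]
  have h0 := sturmianCoeff_nonneg (Int.fract_nonneg β) x
  have h1 := sturmianCoeff_le_one (Int.fract_lt_one β).le x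
  constructor <;> exact_mod_cast (by omega)

lemma summable_pnat_div_cpow_of_norm_le {a : ℕ+ → ℂ} {C : ℝ} (ha : ∀ n, ‖a n‖ ≤ C)
    {s : ℂ} (hs : 1 < s.re) : Summable fun n : ℕ+ => a n / (n : ℂ) ^ s := by
  have hone : Summable fun n : ℕ+ => 1 / (n : ℂ) ^ s :=
    (Complex.summable_one_div_nat_cpow.mpr hs).comp_injective PNat.coe_injective
  refine Summable.of_norm_bounded (hone.norm.mul_left C) fun n => ?_
  rw [norm_div, norm_div, norm_one, mul_one_div]
  gcongr
  exact ha n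

lemma tsum_pnat_one_div_cpow_eq_riemannZeta {s : ℂ} (hs : 1 < s.re) :
    ∑' n : ℕ+, 1 / (n : ℂ) ^ s = riemannZeta s := by
  rw [zeta_eq_tsum_one_div_nat_add_one_cpow hs,
    tsum_pnat_eq_tsum_succ (f := fun n => 1 / (n : ℂ) ^ s)]
  push_cast
  rfl

theorem stmt_14_general (β : ℝ) (s : ℂ) (hs : 1 < s.re) :
    ∑' n : ℕ+, ((⌈β * (n : ℝ)⌉ - ⌈β * ((n : ℝ) - 1)⌉ : ℤ) : ℂ) / (n : ℂ) ^ s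
      = (⌊β⌋ : ℂ) * riemannZeta s
        + ∑' n : ℕ+,
            ((⌈Int.fract β * (n : ℝ)⌉ - ⌈Int.fract β * ((n : ℝ) - 1)⌉ : ℤ) : ℂ) / (n : ℂ) ^ s := by
  change ∑' n : ℕ+, (sturmianCoeff β n : ℂ) / (n : ℂ) ^ s
    = ⌊β⌋ * riemannZeta s
      + ∑' n : ℕ+, (sturmianCoeff (Int.fract β) n : ℂ) / (n : ℂ) ^ s
  have hsplit (n : ℕ+) : (sturmianCoeff β n : ℂ) / (n : ℂ) ^ s
      = ⌊β⌋ / (n : ℂ) ^ s + (sturmianCoeff (Int.fract β) n : ℂ) / (n : ℂ) ^ s := by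
    have hcoeff := congrArg (Int.cast : ℤ → ℂ) (sturmianCoeff_eq_floor_add_fract β n)
    push_cast at hcoeff
    rw [hcoeff, add_div]
  have hconst :=
    summable_pnat_div_cpow_of_norm_le (a := fun _ => (⌊β⌋ : ℂ)) (fun _ => le_rfl) hs
  have hfract := summable_pnat_div_cpow_of_norm_le
    (fun n => norm_sturmianCoeff_fract_le_one β n) hs
  rw [tsum_congr hsplit, hconst.tsum_add hfract, ← tsum_pnat_one_div_cpow_eq_riemannZeta hs,
    ← tsum_mul_left]
  simp only [mul_one_div]

theorem stmt_14 (α : ℝ) (hα : α ∈ Set.Ioo (0 : ℝ) 1) (hirr : Irrational α)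
    (β : ℝ) (hβ : β = 1 / α) (s : ℂ) (hs : 1 < s.re) :
    ∑' n : ℕ+, ((⌈β * (n : ℝ)⌉ - ⌈β * ((n : ℝ) - 1)⌉ : ℤ) : ℂ) / (n : ℂ) ^ s
      = (⌊β⌋ : ℂ) * riemannZeta s
        + ∑' n : ℕ+,
            ((⌈Int.fract β * (n : ℝ)⌉ - ⌈Int.fract β * ((n : ℝ) - 1)⌉ : ℤ) : ℂ) / (n : ℂ) ^ s :=
  stmt_14_general β s hs
end

section
/- Let (a_n) be a bounded complex sequence and q a positive integer. For every s with Re(s) > 1, ∑_{n≥1} a_{n+q} n^{-s} = ∑_{m=0}^∞ (-q)^m C(-s,m) ∑_{n>q} a_n n^{-s-m}, where the outer series converges absolutely. -/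
theorem genBinom_eq_choose {K : Type*} [Field K] [CharZero K] (w : K) (m : ℕ) :
    genBinom w m = Ring.choose w m := by
  rw [genBinom, Ring.choose_eq_smul, ← Polynomial.aeval_eq_smeval,
    ← Polynomial.eval_map_algebraMap, descPochhammer_map, descPochhammer_eval_eq_prod_range,
    smul_eq_mul, div_eq_inv_mul]

namespace Complex

theorem hasSum_choose_mul_pow (w : ℂ) {x : ℂ} (hx : ‖x‖ < 1) :
    HasSum (fun m ↦ Ring.choose w m * x ^ m) ((1 + x) ^ w) := by
  have hx' : x ∈ Metric.eball (0 : ℂ) 1 := by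
    rw [← ENNReal.ofReal_one, Metric.eball_ofReal]
    simpa using hx
  simpa [binomialSeries, mul_comm] using one_add_cpow_hasFPowerSeriesOnBall_zero.hasSum hx'

theorem summable_norm_choose_mul_pow (w : ℂ) {r : ℝ} (hr0 : 0 ≤ r) (hr : r < 1) :
    Summable (fun m ↦ ‖Ring.choose w m‖ * r ^ m) := by
  lift r to NNReal using hr0
  have h := (binomialSeries ℂ w).summable_norm_mul_pow
    (lt_of_lt_of_le (by exact_mod_cast hr) binomialSeries_radius_ge_one)
  simpa [binomialSeries, FormalMultilinearSeries.ofScalars_norm] using h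

theorem hasSum_choose_mul_pow_mul_cpow (w : ℂ) {x y : ℝ} (hx : 0 < x) (hy : |y| < x) :
    HasSum (fun m ↦ Ring.choose w m * (y : ℂ) ^ m * (x : ℂ) ^ (w - m)) ((x + y : ℝ) ^ w) := by
  have hx0 : (x : ℂ) ≠ 0 := ofReal_ne_zero.mpr hx.ne'
  have hratio : ‖(y / x : ℝ)‖ < 1 := by
    rw [Real.norm_eq_abs, abs_div, abs_of_pos hx, div_lt_one hx]
    exact hy
  have hfactor : x + y = x * (1 + y / x) := by field_simp
  have hnonneg : 0 ≤ 1 + y / x := by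
    rw [abs_lt] at hy
    rw [← div_self hx.ne', ← add_div]
    exact div_nonneg (by linarith) hx.le
  rw [hfactor, ofReal_mul, mul_cpow_ofReal_nonneg hx.le hnonneg, ofReal_add, ofReal_one]
  refine ((hasSum_choose_mul_pow w (x := (y / x : ℝ)) (by simpa using hratio)).mul_left
    ((x : ℂ) ^ w)).congr_fun fun m ↦ ?_
  rw [cpow_sub _ _ hx0, cpow_natCast, ofReal_div, div_pow]
  field_simp

end Complex

theorem summable_norm_tsum_of_summable_norm {β γ E : Type*} [NormedAddCommGroup E]
    [CompleteSpace E] {f : β → γ → E} (hf : Summable fun p : β × γ ↦ ‖f p.1 p.2‖) :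
    Summable fun c ↦ ‖∑' b, f b c‖ := by
  obtain ⟨hcol, hsum⟩ := (summable_prod_of_nonneg fun _ ↦ norm_nonneg _).mp hf.prod_symm
  exact hsum.of_nonneg_of_le (fun _ ↦ norm_nonneg _) fun c ↦ norm_tsum_le_tsum_norm (hcol c)

theorem norm_neg_pow_mul_natCast_cpow_le {q N : ℕ} (hqN : q < N) (s : ℂ) (m : ℕ) :
    ‖(-(q : ℂ)) ^ m * (N : ℂ) ^ (-(s + m))‖ ≤ (N : ℝ) ^ (-s.re) * ((q : ℝ) / (q + 1)) ^ m := by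
  have hN : 0 < N := (Nat.zero_le q).trans_lt hqN
  have hNR : (0 : ℝ) < N := by exact_mod_cast hN
  have hqN' : (q : ℝ) + 1 ≤ N := by exact_mod_cast hqN
  calc ‖(-(q : ℂ)) ^ m * (N : ℂ) ^ (-(s + m))‖
      = (N : ℝ) ^ (-s.re) * ((q : ℝ) / N) ^ m := by
        rw [norm_mul, norm_pow, norm_neg, Complex.norm_natCast,
          Complex.norm_natCast_cpow_of_pos hN, neg_add_rev, Complex.add_re, Complex.neg_re,
          Complex.neg_re, Complex.natCast_re, Real.rpow_add hNR, Real.rpow_neg hNR.le,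
          Real.rpow_natCast, div_pow]
        ring
    _ ≤ (N : ℝ) ^ (-s.re) * ((q : ℝ) / (q + 1)) ^ m := by gcongr

noncomputable def binomShiftTerm (a : ℕ → ℂ) (q : ℕ) (s : ℂ) (k m : ℕ) : ℂ :=
  (-(q : ℂ)) ^ m * genBinom (-s) m * (a (q + 1 + k) * ((q + 1 + k : ℕ) : ℂ) ^ (-(s + m)))

theorem hasSum_binomShiftTerm (a : ℕ → ℂ) (q : ℕ) (s : ℂ) (k : ℕ) :
    HasSum (binomShiftTerm a q s k) (a (q + 1 + k) * ((k + 1 : ℕ) : ℂ) ^ (-s)) := by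
  have hx : (0 : ℝ) < (q + 1 + k : ℕ) := by positivity
  have hy : |(-q : ℝ)| < (q + 1 + k : ℕ) := by
    rw [abs_neg, Nat.abs_cast]
    exact_mod_cast (by omega : q < q + 1 + k)
  have h := (Complex.hasSum_choose_mul_pow_mul_cpow (-s) hx hy).mul_left (a (q + 1 + k))
  have hN : ((q + 1 + k : ℕ) + (-q : ℝ) : ℝ) = (k + 1 : ℕ) := by push_cast; ring
  rw [hN, Complex.ofReal_natCast] at h
  refine h.congr_fun fun m ↦ ?_
  simp only [binomShiftTerm, genBinom_eq_choose, Complex.ofReal_neg, Complex.ofReal_natCast,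
    neg_add']
  ring

theorem summable_norm_binomShiftTerm {a : ℕ → ℂ} {C : ℝ} (hC : ∀ n, ‖a n‖ ≤ C) (q : ℕ) {s : ℂ}
    (hs : 1 < s.re) : Summable fun p : ℕ × ℕ ↦ ‖binomShiftTerm a q s p.1 p.2‖ := by
  have hC0 : 0 ≤ C := (norm_nonneg _).trans (hC 0)
  have hrow : Summable fun k : ℕ ↦ C * ((q + 1 + k : ℕ) : ℝ) ^ (-s.re) :=
    ((Real.summable_nat_rpow.mpr (by linarith)).comp_injective
      (add_right_injective (q + 1))).mul_left C
  have hcol := Complex.summable_norm_choose_mul_pow (-s) (r := (q : ℝ) / (q + 1))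
    (by positivity) ((div_lt_one (by positivity)).mpr (lt_add_one _))
  refine (hrow.mul_of_nonneg hcol (fun _ ↦ by positivity) fun _ ↦ by positivity).of_nonneg_of_le
    (fun _ ↦ norm_nonneg _) fun ⟨k, m⟩ ↦ ?_
  calc ‖binomShiftTerm a q s k m‖
      = ‖a (q + 1 + k)‖ * ‖genBinom (-s) m‖ *
          ‖(-(q : ℂ)) ^ m * ((q + 1 + k : ℕ) : ℂ) ^ (-(s + m))‖ := by
        simp only [binomShiftTerm, norm_mul]; ring
    _ ≤ C * ‖Ring.choose (-s) m‖ *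
          (((q + 1 + k : ℕ) : ℝ) ^ (-s.re) * ((q : ℝ) / (q + 1)) ^ m) := by
        rw [genBinom_eq_choose]
        gcongr
        · exact hC _
        · exact norm_neg_pow_mul_natCast_cpow_le (by omega) s m
    _ = C * ((q + 1 + k : ℕ) : ℝ) ^ (-s.re) *
          (‖Ring.choose (-s) m‖ * ((q : ℝ) / (q + 1)) ^ m) := by
        ring

theorem stmt_16_general (a : ℕ → ℂ) (C : ℝ) (hC : ∀ n, ‖a n‖ ≤ C) (q : ℕ)
    (s : ℂ) (hs : 1 < s.re) :
    (∑' n : ℕ+, a (n + q) * (n : ℂ) ^ (-s))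
        = ∑' m : ℕ, (-(q : ℂ)) ^ m * genBinom (-s) m *
            ∑' k : ℕ, a (q + 1 + k) * ((q + 1 + k : ℕ) : ℂ) ^ (-(s + m))
      ∧ Summable (fun m : ℕ => ‖(-(q : ℂ)) ^ m * genBinom (-s) m *
            ∑' k : ℕ, a (q + 1 + k) * ((q + 1 + k : ℕ) : ℂ) ^ (-(s + m))‖) := by
  have hT := summable_norm_binomShiftTerm hC q hs
  have hcol (m : ℕ) : ∑' k, binomShiftTerm a q s k m = (-(q : ℂ)) ^ m * genBinom (-s) m *
      ∑' k : ℕ, a (q + 1 + k) * ((q + 1 + k : ℕ) : ℂ) ^ (-(s + m)) :=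
    tsum_mul_left
  simp only [← hcol]
  refine ⟨?_, summable_norm_tsum_of_summable_norm hT⟩
  rw [tsum_pnat_eq_tsum_succ (f := fun n ↦ a (n + q) * (n : ℂ) ^ (-s)),
    Summable.tsum_comm (f := binomShiftTerm a q s) hT.of_norm]
  refine tsum_congr fun k ↦ ?_
  rw [(hasSum_binomShiftTerm a q s k).tsum_eq, show k + 1 + q = q + 1 + k by ring]

theorem stmt_16 (a : ℕ → ℂ) (C : ℝ) (hC : ∀ n, ‖a n‖ ≤ C) (q : ℕ) (hq : 0 < q)
    (s : ℂ) (hs : 1 < s.re) :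
    (∑' n : ℕ+, a (n + q) * (n : ℂ) ^ (-s))
        = ∑' m : ℕ, (-(q : ℂ)) ^ m * genBinom (-s) m *
            ∑' k : ℕ, a (q + 1 + k) * ((q + 1 + k : ℕ) : ℂ) ^ (-(s + m))
      ∧ Summable (fun m : ℕ => ‖(-(q : ℂ)) ^ m * genBinom (-s) m *
            ∑' k : ℕ, a (q + 1 + k) * ((q + 1 + k : ℕ) : ℂ) ^ (-(s + m))‖) :=
  stmt_16_general a C hC q s hs
end
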